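/- Let (V,d,b) be an acyclic information network, let A ⊆ V\{d} be a transient initial set, and run the NLT dynamics with empty permanent initial set. Then for every non-void node v and every 1 ≤ t ≤ T: E[X^t_v(A,∅)] = ∑_{u∈A} (b^t) v u, where b^t is the t-th matrix power of b (i.e., the probability that v is active at time t equals the probability that a random walk with transition matrix b started at v is in A at time t). -/

import Mathlib

open MeasureTheory

/-- An information network: a finite node set `V` with a distinguished void node `d`
and a row-stochastic weight matrix `b` with entries in `[0,1]` and `b d d = 1`. -/
structure InfoNetwork (V : Type*) [Fintype V] where
  d : V
  b : V → V → ℝ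
  b_nonneg : ∀ v u, 0 ≤ b v u
  b_le_one : ∀ v u, b v u ≤ 1
  row_sum : ∀ v, ∑ u, b v u = 1
  void_loop : b d d = 1

/-- The uniform probability measure on the interval `(0,1)`. -/
noncomputable def unifMeasure : Measure ℝ := volume.restrict (Set.Ioo (0:ℝ) 1)

/-- Product over `V` of uniform measures on `(0,1)`: the distribution of the thresholds. -/
noncomputable def thresholdMeasure (V : Type*) [Fintype V] : Measure (V → ℝ) :=
  Measure.pi fun _ : V => unifMeasure

namespace InfoNetwork

variable {V : Type*} [Fintype V]

/-- The set of active nodes at time `t` under the non-progressive linear threshold model,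
with transient initial set `A`, permanent initial set `Ahat` and thresholds `θ`. -/
noncomputable def activeSet (N : InfoNetwork V) (A Ahat : Set V) (θ : V → ℝ) : ℕ → Set V
  | 0 => A ∪ Ahat
  | t+1 => Ahat ∪
      {v | v ∉ Ahat ∧ θ v ≤ ∑ u, (N.activeSet A Ahat θ t).indicator (N.b v) u}

/-- `E[X^t_v(A,Ahat)]`: the probability (over the random thresholds) that `v` is active
at time `t`. -/
noncomputable def EX (N : InfoNetwork V) (A Ahat : Set V) (t : ℕ) (v : V) : ℝ :=
  (thresholdMeasure V {θ | v ∈ N.activeSet A Ahat θ t}).toReal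

/-- The expected influence over the period `[1,T]`. -/
noncomputable def sigmaBar (N : InfoNetwork V) (T : ℕ) (A Ahat : Set V) : ℝ :=
  (1 / (T : ℝ)) * ∑ t ∈ Finset.Icc 1 T, ∑ v, N.EX A Ahat t v

/-- The edge relation of the directed graph on `V \ {d}`. -/
def edgeRel (N : InfoNetwork V) (v u : V) : Prop :=
  v ≠ N.d ∧ u ≠ N.d ∧ 0 < N.b v u

/-- The network is acyclic if the directed graph on `V \ {d}` has no directed cycle. -/
def Acyclic (N : InfoNetwork V) : Prop :=
  ∀ v, ¬ Relation.TransGen N.edgeRel v v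

end InfoNetwork

/-- A real-valued set function `f` is submodular on the ground set `S`. -/
def SubmodularOn {V : Type*} (S : Set V) (f : Set V → ℝ) : Prop :=
  ∀ A B : Set V, A ⊆ B → B ⊆ S → ∀ w ∈ S, w ∉ B →
    f (insert w B) - f B ≤ f (insert w A) - f A

/-!
Write `p t v` for the probability that `v` is active at time `t`. Node `v` is active at time
`t + 1` iff `θ v ≤ g θ := ∑ u, b v u * [u active at time t]`. Whether `u` is active depends only
on the thresholds of the nodes reachable from `u`, and by acyclicity no `u` with `b v u > 0`
reaches `v ≠ d`; so `g` does not depend on `θ v`, and integrating `θ v` out first gives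
`p (t + 1) v = E[g] = ∑ u, b v u * p t u`. The void node, whose row of `b` is that of the
identity, almost surely keeps its initial state, so the recursion `p (t + 1) = b *ᵥ p t` holds
there too, whence `p t = b ^ t *ᵥ 1_A`.
-/

open Set Function
open scoped Matrix

instance : IsProbabilityMeasure unifMeasure :=
  ⟨by simp [unifMeasure]⟩

instance {V : Type*} [Fintype V] : IsProbabilityMeasure (thresholdMeasure V) := by
  unfold thresholdMeasure
  infer_instance

lemma unifMeasure_Iic {c : ℝ} (hc : c ≤ 1) : unifMeasure (Iic c) = ENNReal.ofReal c := by
  rw [unifMeasure, Measure.restrict_apply measurableSet_Iic]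
  refine le_antisymm ?_ ?_
  · calc volume (Iic c ∩ Ioo 0 1) ≤ volume (Icc 0 c) :=
          measure_mono fun x hx => ⟨hx.2.1.le, hx.1⟩
      _ = ENNReal.ofReal c := by simp
  · calc ENNReal.ofReal c = volume (Ioo 0 c) := by simp
      _ ≤ volume (Iic c ∩ Ioo 0 1) :=
          measure_mono fun x hx => ⟨hx.2.le, hx.1, hx.2.trans_le hc⟩

lemma ae_threshold_mem_Ioo {V : Type*} [Fintype V] (w : V) :
    ∀ᵐ θ ∂thresholdMeasure V, θ w ∈ Ioo 0 1 :=
  Measure.tendsto_eval_ae_ae.eventually (ae_restrict_mem measurableSet_Ioo)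

lemma thresholdMeasure_real_le_eq_integral {V : Type*} [Fintype V] [DecidableEq V] {v : V}
    {g : (V → ℝ) → ℝ} (hg : Measurable g) (hg0 : ∀ θ, 0 ≤ g θ) (hg1 : ∀ θ, g θ ≤ 1)
    (hgv : ∀ θ x, g (update θ v x) = g θ) :
    (thresholdMeasure V).real {θ | θ v ≤ g θ} = ∫ θ, g θ ∂thresholdMeasure V := by
  have hE : MeasurableSet {θ : V → ℝ | θ v ≤ g θ} := measurableSet_le (measurable_pi_apply v) hg
  have hlin : thresholdMeasure V {θ | θ v ≤ g θ}
      = ∫⁻ θ, ENNReal.ofReal (g θ) ∂thresholdMeasure V := by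
    rw [← lintegral_indicator_one hE]
    refine lintegral_eq_of_lmarginal_eq {v} (measurable_one.indicator hE) hg.ennreal_ofReal ?_
    ext θ
    have hslice : ∀ x, {θ : V → ℝ | θ v ≤ g θ}.indicator 1 (update θ v x)
        = (Iic (g θ)).indicator (1 : ℝ → ENNReal) x := by
      intro x
      simp [indicator_apply, hgv]
    simp only [lmarginal_singleton, hslice, hgv, lintegral_indicator_one measurableSet_Iic,
      unifMeasure_Iic (hg1 θ), lintegral_const, measure_univ, mul_one]
  rw [measureReal_def, hlin, integral_eq_lintegral_of_nonneg_ae (ae_of_all _ hg0)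
    hg.aestronglyMeasurable]

lemma measurable_sum_indicator {Ω V : Type*} [MeasurableSpace Ω] [Fintype V] {S : Ω → Set V}
    (hS : ∀ u, MeasurableSet {ω | u ∈ S ω}) (w : V → ℝ) :
    Measurable fun ω => ∑ u, (S ω).indicator w u := by
  classical
  exact Finset.measurable_sum _ fun u _ => Measurable.ite (hS u) measurable_const measurable_const

lemma integral_sum_indicator {Ω V : Type*} [MeasurableSpace Ω] [Fintype V] (μ : Measure Ω)
    [IsFiniteMeasure μ] {S : Ω → Set V} (hS : ∀ u, MeasurableSet {ω | u ∈ S ω}) (w : V → ℝ) :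
    ∫ ω, ∑ u, (S ω).indicator w u ∂μ = ∑ u, w u * μ.real {ω | u ∈ S ω} := by
  have hind : ∀ ω u, (S ω).indicator w u = {ω | u ∈ S ω}.indicator (fun _ => w u) ω :=
    fun _ _ => rfl
  simp_rw [hind]
  rw [integral_finsetSum _ fun u _ => (integrable_const _).indicator (hS u)]
  simp [integral_indicator_const _ (hS _), mul_comm]

lemma sum_indicator_eq_mulVec {V : Type*} [Fintype V] (M : Matrix V V ℝ) (A : Set V) (v : V) :
    ∑ u, A.indicator (M v) u = (M *ᵥ A.indicator 1) v := by
  refine Finset.sum_congr rfl fun u _ => ?_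
  by_cases hu : u ∈ A <;> simp [hu]

namespace InfoNetwork

variable {V : Type*} [Fintype V] (N : InfoNetwork V)

lemma b_void_of_ne {u : V} (hu : u ≠ N.d) : N.b N.d u = 0 := by
  classical
  have hrest : ∑ w ∈ Finset.univ.erase N.d, N.b N.d w = 0 := by
    have := N.row_sum N.d
    rw [← Finset.add_sum_erase _ _ (Finset.mem_univ N.d), N.void_loop] at this
    linarith
  exact (Finset.sum_eq_zero_iff_of_nonneg fun w _ => N.b_nonneg N.d w).mp hrest u
    (Finset.mem_erase.mpr ⟨hu, Finset.mem_univ u⟩)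

lemma ne_void_of_b_pos {x y : V} (hxy : 0 < N.b x y) (hy : y ≠ N.d) : x ≠ N.d := by
  rintro rfl
  exact hxy.ne' (N.b_void_of_ne hy)

lemma mulVec_apply_void [DecidableEq V] (x : V → ℝ) : (Matrix.of N.b *ᵥ x) N.d = x N.d := by
  rw [Matrix.mulVec, dotProduct, Finset.sum_eq_single N.d
    (fun u _ hu => by simp [N.b_void_of_ne hu]) (by simp)]
  simp [N.void_loop]

lemma sum_indicator_b_nonneg (S : Set V) (v : V) : 0 ≤ ∑ u, S.indicator (N.b v) u :=
  Finset.sum_nonneg fun u _ => indicator_nonneg (fun u _ => N.b_nonneg v u) u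

lemma sum_indicator_b_le_one (S : Set V) (v : V) : ∑ u, S.indicator (N.b v) u ≤ 1 :=
  (Finset.sum_le_sum fun u _ => indicator_le_self' (fun u _ => N.b_nonneg v u) u).trans
    (N.row_sum v).le

lemma sum_indicator_b_congr {S S' : Set V} {v : V} (h : ∀ u, 0 < N.b v u → (u ∈ S ↔ u ∈ S')) :
    ∑ u, S.indicator (N.b v) u = ∑ u, S'.indicator (N.b v) u := by
  classical
  refine Finset.sum_congr rfl fun u _ => ?_
  rcases (N.b_nonneg v u).eq_or_lt with h0 | hpos
  · simp [indicator_apply, ← h0]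
  · simp [indicator_apply, h u hpos]

def Reaches : V → V → Prop := Relation.ReflTransGen fun x y => 0 < N.b x y

lemma transGen_edgeRel {x y : V} (h : Relation.TransGen (fun x y => 0 < N.b x y) x y)
    (hy : y ≠ N.d) : Relation.TransGen N.edgeRel x y := by
  induction h with
  | single hxy => exact .single ⟨N.ne_void_of_b_pos hxy hy, hy, hxy⟩
  | tail _ hmz ih =>
    exact (ih (N.ne_void_of_b_pos hmz hy)).tail ⟨N.ne_void_of_b_pos hmz hy, hy, hmz⟩

lemma Acyclic.not_reaches {N : InfoNetwork V} (hacyc : N.Acyclic) {v u : V} (hv : v ≠ N.d)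
    (hvu : 0 < N.b v u) : ¬ N.Reaches u v :=
  fun h => hacyc v (N.transGen_edgeRel (.head' hvu h) hv)

lemma mem_activeSet_succ_empty {A : Set V} {θ : V → ℝ} {t : ℕ} {v : V} :
    v ∈ N.activeSet A ∅ θ (t + 1) ↔ θ v ≤ ∑ u, (N.activeSet A ∅ θ t).indicator (N.b v) u := by
  simp [activeSet]

lemma mem_activeSet_congr (A Ahat : Set V) {θ θ' : V → ℝ} (t : ℕ) {u : V}
    (h : ∀ w, N.Reaches u w → θ w = θ' w) :
    u ∈ N.activeSet A Ahat θ t ↔ u ∈ N.activeSet A Ahat θ' t := by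
  induction t generalizing u with
  | zero => rfl
  | succ t ih =>
    have hsum := N.sum_indicator_b_congr fun w huw =>
      ih fun z hwz => h z (Relation.ReflTransGen.head huw hwz)
    simp only [activeSet, mem_union, mem_ofPred_eq, h u Relation.ReflTransGen.refl, hsum]

lemma measurableSet_mem_activeSet (A Ahat : Set V) (t : ℕ) (v : V) :
    MeasurableSet {θ : V → ℝ | v ∈ N.activeSet A Ahat θ t} := by
  induction t generalizing v with
  | zero => exact MeasurableSet.const _
  | succ t ih =>
    simp only [activeSet, mem_union, ofPred_or, ofPred_and]
    exact (MeasurableSet.const _).union ((MeasurableSet.const _).inter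
      (measurableSet_le (measurable_pi_apply v) (measurable_sum_indicator ih _)))

lemma void_mem_activeSet_iff (A : Set V) {θ : V → ℝ} (hθ : θ N.d ∈ Ioo 0 1) (t : ℕ) :
    N.d ∈ N.activeSet A ∅ θ t ↔ N.d ∈ A := by
  induction t with
  | zero => simp [activeSet]
  | succ t ih =>
    have hsum : ∑ u, (N.activeSet A ∅ θ t).indicator (N.b N.d) u
        = (N.activeSet A ∅ θ t).indicator (N.b N.d) N.d :=
      Finset.sum_eq_single N.d (fun u _ hu => by simp [N.b_void_of_ne hu]) (by simp)
    rw [mem_activeSet_succ_empty, hsum, ← ih]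
    by_cases hd : N.d ∈ N.activeSet A ∅ θ t
    · simp [hd, N.void_loop, hθ.2.le]
    · simp [hd, hθ.1]

lemma EX_void (A : Set V) (t : ℕ) : N.EX A ∅ t N.d = A.indicator 1 N.d := by
  have hae : {θ : V → ℝ | N.d ∈ N.activeSet A ∅ θ t} =ᵐ[thresholdMeasure V] {_θ | N.d ∈ A} :=
    Filter.eventuallyEq_set.mpr <| (ae_threshold_mem_Ioo N.d).mono fun θ hθ =>
      N.void_mem_activeSet_iff A hθ t
  rw [EX, ← measureReal_def, measureReal_congr hae]
  by_cases hd : N.d ∈ A <;> simp [hd]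

lemma EX_zero (A : Set V) : N.EX A ∅ 0 = A.indicator 1 := by
  ext v
  by_cases hv : v ∈ A <;> simp [EX, activeSet, hv]

lemma EX_succ [DecidableEq V] (hacyc : N.Acyclic) (A : Set V) (t : ℕ) :
    N.EX A ∅ (t + 1) = Matrix.of N.b *ᵥ N.EX A ∅ t := by
  ext v
  by_cases hv : v = N.d
  · subst hv
    rw [mulVec_apply_void, EX_void, EX_void]
  set g : (V → ℝ) → ℝ := fun θ => ∑ u, (N.activeSet A ∅ θ t).indicator (N.b v) u
  have hgv : ∀ θ x, g (update θ v x) = g θ := fun θ x =>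
    N.sum_indicator_b_congr fun u hvu => N.mem_activeSet_congr A ∅ t fun w huw =>
      update_of_ne (by rintro rfl; exact hacyc.not_reaches hv hvu huw) _ _
  have hmeas := N.measurableSet_mem_activeSet A ∅ t
  calc N.EX A ∅ (t + 1) v = (thresholdMeasure V).real {θ | θ v ≤ g θ} := by
        simp only [EX, ← measureReal_def, mem_activeSet_succ_empty, g]
    _ = ∫ θ, g θ ∂thresholdMeasure V :=
        thresholdMeasure_real_le_eq_integral (measurable_sum_indicator hmeas _)
          (fun θ => N.sum_indicator_b_nonneg _ v) (fun θ => N.sum_indicator_b_le_one _ v) hgv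
    _ = (Matrix.of N.b *ᵥ N.EX A ∅ t) v := by
        rw [integral_sum_indicator _ hmeas]
        rfl

lemma EX_eq_pow_mulVec [DecidableEq V] (hacyc : N.Acyclic) (A : Set V) (t : ℕ) :
    N.EX A ∅ t = (Matrix.of N.b ^ t) *ᵥ A.indicator 1 := by
  induction t with
  | zero => simp [EX_zero]
  | succ t ih => rw [N.EX_succ hacyc, ih, Matrix.mulVec_mulVec, ← pow_succ']

end InfoNetwork

theorem EX_eq_randomWalk_general {V : Type*} [Fintype V] [DecidableEq V] (N : InfoNetwork V)
    (hacyc : N.Acyclic) (A : Set V) (t : ℕ) (v : V) :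
    N.EX A ∅ t v = ∑ u, A.indicator ((Matrix.of N.b ^ t) v) u := by
  rw [N.EX_eq_pow_mulVec hacyc, sum_indicator_eq_mulVec]

/-- in an acyclic network, for a transient initial set `A` (and empty permanent
set), a non-void node `v` and a time `1 ≤ t ≤ T`, the probability that `v` is active at time
`t` equals `∑_{u ∈ A} (b^t) v u`, the probability that a random walk with transition matrix
`b` started at `v` is in `A` at time `t`. -/
theorem EX_eq_randomWalk {V : Type*} [Fintype V] [DecidableEq V] (N : InfoNetwork V)
    (hacyc : N.Acyclic) (A : Set V) (hA : A ⊆ {x : V | x ≠ N.d})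
    (T : ℕ) (t : ℕ) (ht1 : 1 ≤ t) (htT : t ≤ T) (v : V) (hv : v ≠ N.d) :
    N.EX A ∅ t v = ∑ u, A.indicator ((Matrix.of N.b ^ t) v) u :=
  EX_eq_randomWalk_general N hacyc A t v
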